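/- Let N ∈ ℕ and let g_1, …, g_N be measurable functions on ℝ³. Then for every ε > 0 there is a constant C_ε, independent of N and of the g_m, such that ‖ Σ_{m=1}^N M g_m ‖_{L^{10/3}(ℝ³)} ≤ C_ε N^ε ‖ Σ_{m=1}^N |g_m| ‖_{L^{10/3}(ℝ³)}. -/

import Mathlib

open MeasureTheory Real
open scoped ENNReal BigOperators

noncomputable section

/-- the (centered) Hardy–Littlewood maximal function, with values in `ℝ≥0∞` -/
def HLmax {n : ℕ} (g : EuclideanSpace ℝ (Fin n) → ℝ) (x : EuclideanSpace ℝ (Fin n)) : ℝ≥0∞ :=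
  ⨆ (r : ℝ) (_ : 0 < r),
    (volume (Metric.ball x r))⁻¹ * ∫⁻ y in Metric.ball x r, ENNReal.ofReal |g y|

/-!
Fix `1 < q < p = 10/3` with `1 - 1/q ≤ ε`. The heart of the proof is the Fefferman–Stein weighted
inequality `∫ (M u)^q w ≤ C ∫ u^q M w`, obtained from a weighted weak type `(1,1)` bound (Vitali
covering) by a dyadic decomposition of the level sets of `M u`. Write `F = Σ M g_m` and
`G = Σ |g_m|`. Since `F^q ≤ N^(q-1) Σ (M g_m)^q`, the weighted inequality with weight `F^(p-q)`
followed by Hölder's inequality with exponents `p/q` and `p/(p-q)` gives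
`‖F‖_p^p ≤ N^(q-1) C ‖G‖_p^q ‖M(F^(p-q))‖_(p/(p-q)) ≤ N^(q-1) C' ‖G‖_p^q ‖F‖_p^(p-q)`,
and the crude bound `‖F‖_p ≤ N C_p ‖G‖_p` makes `‖F‖_p` finite, so that we may divide by
`‖F‖_p^(p-q)`.
-/

open Metric Set Module Function

namespace ENNReal

theorem rpow_le_four_rpow_mul_tsum_dyadic {q : ℝ} (hq : 0 < q) (t : ℝ≥0∞) :
    t ^ q ≤ 4 ^ q * ∑' k : ℤ, if 2 * 2 ^ k < t then ((2 : ℝ≥0∞) ^ k) ^ q else 0 := by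
  rcases eq_or_ne t 0 with rfl | ht0
  · simp [zero_rpow_of_pos hq]
  rcases eq_or_ne t ⊤ with rfl | htop
  · have hsum : ∑' k : ℤ, (if (2 : ℝ≥0∞) * 2 ^ k < ⊤ then ((2 : ℝ≥0∞) ^ k) ^ q else 0) = ⊤ := by
      refine top_unique
        ((ENNReal.tsum_const_eq_top_of_ne_zero (α := ℕ) one_ne_zero).symm.le.trans ?_)
      refine (ENNReal.tsum_le_tsum fun n : ℕ => ?_).trans
        (ENNReal.tsum_comp_le_tsum_of_injective Nat.cast_injective _)
      rw [if_pos (by finiteness), zpow_natCast]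
      exact ENNReal.one_le_rpow (one_le_pow₀ one_le_two) hq
    rw [hsum, ENNReal.mul_top (by positivity)]
    exact le_top
  obtain ⟨n, hn, htn⟩ := exists_mem_Ioc_zpow ht0 htop ENNReal.one_lt_two ofNat_ne_top
  calc t ^ q ≤ ((2 : ℝ≥0∞) ^ (n + 1)) ^ q := ENNReal.rpow_le_rpow htn hq.le
    _ = 4 ^ q * ((2 : ℝ≥0∞) ^ (n - 1)) ^ q := by
      rw [← mul_rpow_of_nonneg _ _ hq.le, show n + 1 = 2 + (n - 1) by ring,
        ENNReal.zpow_add two_ne_zero ofNat_ne_top]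
      norm_num
    _ ≤ 4 ^ q * ∑' k : ℤ, if 2 * 2 ^ k < t then ((2 : ℝ≥0∞) ^ k) ^ q else 0 := by
      gcongr
      refine le_trans ?_ (ENNReal.le_tsum (n - 1))
      have h2 : (2 : ℝ≥0∞) * 2 ^ (n - 1) = 2 ^ n := by
        conv_rhs => rw [show n = 1 + (n - 1) by ring,
          ENNReal.zpow_add two_ne_zero ofNat_ne_top, zpow_one]
      rw [if_pos (h2 ▸ hn)]

theorem tsum_dyadic_rpow_le {r : ℝ} (hr : 0 < r) (t : ℝ≥0∞) :
    ∑' k : ℤ, (if (2 : ℝ≥0∞) ^ k < t then ((2 : ℝ≥0∞) ^ k) ^ r else 0) ≤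
      (1 - 2 ^ (-r))⁻¹ * t ^ r := by
  rcases eq_or_ne t ⊤ with rfl | htop
  · rw [top_rpow_of_pos hr, ENNReal.mul_top (ENNReal.inv_ne_zero.2 (by finiteness))]
    exact le_top
  rcases eq_or_ne t 0 with rfl | ht0
  · simp
  obtain ⟨n, hn, htn⟩ := exists_mem_Ico_zpow ht0 htop ENNReal.one_lt_two ofNat_ne_top
  set f : ℤ → ℝ≥0∞ := fun k => if (2 : ℝ≥0∞) ^ k < t then ((2 : ℝ≥0∞) ^ k) ^ r else 0
  have hsupp : support f ⊆ range fun j : ℕ => n - j := fun k hk => by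
    have hk : (2 : ℝ≥0∞) ^ k < 2 ^ (n + 1) := (not_not.1 fun h => hk (if_neg h)).trans htn
    have : k < n + 1 := lt_of_not_ge fun h => (ENNReal.zpow_le_of_le one_le_two h).not_gt hk
    exact ⟨(n - k).toNat, show n - ((n - k).toNat : ℤ) = k by omega⟩
  have hinj : Injective fun j : ℕ => n - j := fun a b h => by simpa using h
  rw [← hinj.tsum_eq hsupp]
  calc ∑' j : ℕ, f (n - j) ≤ ∑' j : ℕ, ((2 : ℝ≥0∞) ^ n) ^ r * (2 ^ (-r)) ^ j :=
        ENNReal.tsum_le_tsum fun j => by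
          refine (ite_le_sup _ _ _).trans (sup_le (le_of_eq ?_) zero_le)
          simp only [← rpow_intCast, ← rpow_natCast, ← rpow_mul,
            ← rpow_add _ _ two_ne_zero ofNat_ne_top]
          congr 1
          push_cast
          ring
    _ = (1 - 2 ^ (-r))⁻¹ * ((2 : ℝ≥0∞) ^ n) ^ r := by
        rw [ENNReal.tsum_mul_left, ENNReal.tsum_geometric, mul_comm]
    _ ≤ (1 - 2 ^ (-r))⁻¹ * t ^ r := by gcongr

theorem rpow_sub_one_mul_self (x : ℝ≥0∞) {q : ℝ} (hq : 1 ≤ q) : x ^ (q - 1) * x = x ^ q := by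
  conv_rhs => rw [← sub_add_cancel q 1, rpow_add_of_nonneg _ _ (sub_nonneg.2 hq)
    zero_le_one, rpow_one]

theorem one_sub_two_rpow_ne_zero {r : ℝ} (hr : r < 0) : 1 - (2 : ℝ≥0∞) ^ r ≠ 0 :=
  (tsub_pos_iff_lt.2 (rpow_lt_one_of_one_lt_of_neg ENNReal.one_lt_two hr)).ne'

theorem sum_rpow_le_rpow_sum {ι : Type*} (s : Finset ι) (f : ι → ℝ≥0∞) {p : ℝ} (hp : 1 ≤ p) :
    ∑ i ∈ s, f i ^ p ≤ (∑ i ∈ s, f i) ^ p := by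
  classical
  induction s using Finset.induction_on with
  | empty => simp
  | insert i s hi ih =>
    rw [Finset.sum_insert hi, Finset.sum_insert hi]
    calc f i ^ p + ∑ j ∈ s, f j ^ p ≤ f i ^ p + (∑ j ∈ s, f j) ^ p := by gcongr
      _ ≤ (f i + ∑ j ∈ s, f j) ^ p := add_rpow_le_rpow_add _ _ hp

theorem rpow_one_sub_le_of_le_mul_rpow {a c : ℝ≥0∞} {θ : ℝ} (hθ : θ < 1) (ha : a ≠ ⊤)
    (h : a ≤ c * a ^ θ) : a ^ (1 - θ) ≤ c := by
  rcases eq_or_ne a 0 with rfl | ha0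
  · rw [zero_rpow_of_pos (sub_pos.2 hθ)]
    exact zero_le
  rwa [← ENNReal.mul_le_mul_iff_left (rpow_pos (pos_iff_ne_zero.2 ha0) ha).ne'
    (rpow_ne_top_of_ne_zero ha0 ha), ← rpow_add _ _ ha0 ha, sub_add_cancel,
    rpow_one]

theorem natCast_rpow_le_ofReal_rpow (N : ℕ) {a b : ℝ} (ha : 0 < a) (hab : a ≤ b) :
    (N : ℝ≥0∞) ^ a ≤ ENNReal.ofReal ((N : ℝ) ^ b) := by
  rcases N.eq_zero_or_pos with rfl | hN
  · simp [zero_rpow_of_pos ha]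
  rw [← ENNReal.ofReal_natCast, ENNReal.ofReal_rpow_of_nonneg N.cast_nonneg ha.le]
  exact ENNReal.ofReal_le_ofReal (Real.rpow_le_rpow_of_exponent_le (by exact_mod_cast hN) hab)

end ENNReal

section Dyadic

variable {α : Type*} [MeasurableSpace α]

theorem lintegral_rpow_le_tsum_measure_dyadic (ν : Measure α) {f : α → ℝ≥0∞} (hf : Measurable f)
    {q : ℝ} (hq : 0 < q) :
    ∫⁻ x, f x ^ q ∂ν ≤ 4 ^ q * ∑' k : ℤ, ((2 : ℝ≥0∞) ^ k) ^ q * ν {x | 2 * 2 ^ k < f x} := by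
  have hmeas : ∀ k : ℤ, MeasurableSet {x | (2 : ℝ≥0∞) * 2 ^ k < f x} :=
    fun _ => measurableSet_lt measurable_const hf
  calc ∫⁻ x, f x ^ q ∂ν
      ≤ ∫⁻ x, 4 ^ q * ∑' k : ℤ,
          {x | 2 * 2 ^ k < f x}.indicator (fun _ => ((2 : ℝ≥0∞) ^ k) ^ q) x ∂ν :=
        lintegral_mono fun x => by
          simpa only [indicator_apply, mem_ofPred_eq] using
            ENNReal.rpow_le_four_rpow_mul_tsum_dyadic hq (f x)
    _ = 4 ^ q * ∑' k : ℤ, ((2 : ℝ≥0∞) ^ k) ^ q * ν {x | 2 * 2 ^ k < f x} := by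
        rw [lintegral_const_mul' _ _ (by finiteness),
          lintegral_tsum fun k => (measurable_const.indicator (hmeas k)).aemeasurable]
        simp_rw [lintegral_indicator_const (hmeas _)]

theorem tsum_lintegral_dyadic_le (μ : Measure α) {f h : α → ℝ≥0∞} (hf : Measurable f)
    (hh : Measurable h) {r : ℝ} (hr : 0 < r) :
    ∑' k : ℤ, ∫⁻ x, (if (2 : ℝ≥0∞) ^ k < f x then ((2 : ℝ≥0∞) ^ k) ^ r else 0) * h x ∂μ ≤
      (1 - 2 ^ (-r))⁻¹ * ∫⁻ x, f x ^ r * h x ∂μ := by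
  have hmeas : ∀ k : ℤ, Measurable fun x =>
      (if (2 : ℝ≥0∞) ^ k < f x then ((2 : ℝ≥0∞) ^ k) ^ r else 0) * h x := fun _ =>
    (Measurable.ite (measurableSet_lt measurable_const hf) measurable_const measurable_const).mul hh
  rw [← lintegral_tsum fun k => (hmeas k).aemeasurable, ← lintegral_const_mul' _ _
    (ENNReal.inv_ne_top.2 (ENNReal.one_sub_two_rpow_ne_zero (by linarith)))]
  refine lintegral_mono fun x => ?_
  rw [ENNReal.tsum_mul_right, ← mul_assoc]
  gcongr
  exact ENNReal.tsum_dyadic_rpow_le hr (f x)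

end Dyadic

def maximalFunction {X : Type*} [PseudoMetricSpace X] [MeasurableSpace X] (μ : Measure X)
    (u : X → ℝ≥0∞) (x : X) : ℝ≥0∞ :=
  ⨆ (r : ℝ) (_ : 0 < r), (μ (ball x r))⁻¹ * ∫⁻ y in ball x r, u y ∂μ

section MetricMeasureSpace

variable {X : Type*} [PseudoMetricSpace X] [MeasurableSpace X] (μ : Measure X)

theorem average_ball_le_maximalFunction (u : X → ℝ≥0∞) (x : X) {r : ℝ} (hr : 0 < r) :
    (μ (ball x r))⁻¹ * ∫⁻ y in ball x r, u y ∂μ ≤ maximalFunction μ u x :=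
  le_iSup₂ (f := fun r (_ : 0 < r) => (μ (ball x r))⁻¹ * ∫⁻ y in ball x r, u y ∂μ) r hr

theorem maximalFunction_mono {u v : X → ℝ≥0∞} (h : u ≤ v) :
    maximalFunction μ u ≤ maximalFunction μ v :=
  fun x => iSup₂_le fun _ hr => (mul_le_mul_right (lintegral_mono fun y => h y) _).trans
    (average_ball_le_maximalFunction μ v x hr)

theorem maximalFunction_add_le {u : X → ℝ≥0∞} (hu : Measurable u) (v : X → ℝ≥0∞) (x : X) :
    maximalFunction μ (u + v) x ≤ maximalFunction μ u x + maximalFunction μ v x :=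
  iSup₂_le fun r hr => by
    rw [Pi.add_def, lintegral_add_left hu, mul_add]
    exact add_le_add (average_ball_le_maximalFunction μ u x hr)
      (average_ball_le_maximalFunction μ v x hr)

theorem maximalFunction_le_of_le_const {u : X → ℝ≥0∞} {c : ℝ≥0∞} (h : ∀ y, u y ≤ c) (x : X) :
    maximalFunction μ u x ≤ c :=
  iSup₂_le fun r _ => calc
    (μ (ball x r))⁻¹ * ∫⁻ y in ball x r, u y ∂μ ≤ (μ (ball x r))⁻¹ * (c * μ (ball x r)) := by
      gcongr
      exact (lintegral_mono fun y => h y).trans_eq (by simp)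
    _ ≤ c := by
      rw [mul_left_comm]
      exact mul_le_of_le_one_right' (ENNReal.inv_mul_le_one _)

theorem maximalFunction_le_indicator_add {u : X → ℝ≥0∞} (hu : Measurable u) (a : ℝ≥0∞) (x : X) :
    maximalFunction μ u x ≤ maximalFunction μ ({y | a < u y}.indicator u) x + a := by
  have hsplit : u ≤ {y | a < u y}.indicator u + fun _ => a := fun y => by
    by_cases h : a < u y
    · rw [Pi.add_apply, indicator_of_mem (s := {y | a < u y}) h]
      exact le_self_add
    · rw [Pi.add_apply, indicator_of_notMem (s := {y | a < u y}) h, zero_add]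
      exact not_lt.mp h
  have hmeas : Measurable ({y | a < u y}.indicator u) :=
    hu.indicator (measurableSet_lt measurable_const hu)
  calc maximalFunction μ u x
      ≤ maximalFunction μ ({y | a < u y}.indicator u + fun _ => a) x :=
        maximalFunction_mono μ hsplit x
    _ ≤ maximalFunction μ ({y | a < u y}.indicator u) x + maximalFunction μ (fun _ => a) x :=
        maximalFunction_add_le μ hmeas _ x
    _ ≤ maximalFunction μ ({y | a < u y}.indicator u) x + a := by
        gcongr
        exact maximalFunction_le_of_le_const μ (fun _ => le_rfl) x

theorem setLIntegral_ball_le_measure_mul_maximalFunction [ProperSpace X]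
    [IsFiniteMeasureOnCompacts μ] [μ.IsOpenPosMeasure] (u : X → ℝ≥0∞) (x : X) {r : ℝ}
    (hr : 0 < r) : ∫⁻ y in ball x r, u y ∂μ ≤ μ (ball x r) * maximalFunction μ u x :=
  calc ∫⁻ y in ball x r, u y ∂μ
      = μ (ball x r) * ((μ (ball x r))⁻¹ * ∫⁻ y in ball x r, u y ∂μ) := by
        rw [← mul_assoc, ENNReal.mul_inv_cancel (measure_ball_pos μ x hr).ne'
          measure_ball_lt_top.ne, one_mul]
    _ ≤ μ (ball x r) * maximalFunction μ u x := by
        gcongr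
        exact average_ball_le_maximalFunction μ u x hr

end MetricMeasureSpace

section AddHaar

variable {E : Type*} [NormedAddCommGroup E] [MeasurableSpace E] [BorelSpace E] (μ : Measure E)
  [μ.IsAddHaarMeasure]

theorem lowerSemicontinuous_maximalFunction (u : E → ℝ≥0∞) :
    LowerSemicontinuous (maximalFunction μ u) := by
  -- Some average over `ball x s` with `s < r` already exceeds `c`, and `ball x s ⊆ ball x' r`
  -- for `x'` close to `x`, while `μ (ball x' r) = μ (ball x r)` by translation invariance.
  intro x c hc
  obtain ⟨r, hr, hcr⟩ : ∃ r, 0 < r ∧ c < (μ (ball x r))⁻¹ * ∫⁻ y in ball x r, u y ∂μ := by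
    simpa [maximalFunction, lt_iSup_iff] using hc
  have hcont : ∫⁻ y in ball x r, u y ∂μ = ⨆ s : Iio r, ∫⁻ y in ball x s, u y ∂μ := by
    simp_rw [← withDensity_apply u measurableSet_ball]
    have hmono : Monotone fun s : Iio r => ball x (s : ℝ) := fun s s' h => ball_subset_ball h
    rw [← hmono.measure_iUnion, iUnion_subtype]
    simp only [mem_Iio, biUnion_lt_ball]
  rw [hcont, ENNReal.mul_iSup, lt_iSup_iff] at hcr
  obtain ⟨⟨s, hs⟩, hcs⟩ := hcr
  filter_upwards [ball_mem_nhds x (sub_pos.2 hs)] with x' hx'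
  calc c < (μ (ball x r))⁻¹ * ∫⁻ y in ball x s, u y ∂μ := hcs
    _ ≤ (μ (ball x' r))⁻¹ * ∫⁻ y in ball x' r, u y ∂μ := by
      rw [Measure.addHaar_ball_center μ x, Measure.addHaar_ball_center μ x']
      gcongr
      exact ball_subset_ball' (by rw [dist_comm]; linarith [mem_ball.1 hx'])
    _ ≤ maximalFunction μ u x' := average_ball_le_maximalFunction μ u x' hr

theorem measurable_maximalFunction (u : E → ℝ≥0∞) : Measurable (maximalFunction μ u) :=
  (lowerSemicontinuous_maximalFunction μ u).measurable

variable [NormedSpace ℝ E] [FiniteDimensional ℝ E]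

theorem measure_ball_six_mul (x y : E) (r : ℝ) :
    μ (ball y (6 * r)) = 6 ^ finrank ℝ E * μ (ball x r) := by
  rw [Measure.addHaar_ball_mul_of_pos μ y (by norm_num : (0 : ℝ) < 6),
    Measure.addHaar_ball_center μ x, ENNReal.ofReal_pow (by norm_num)]
  norm_num

theorem mul_withDensity_closedBall_le {u : E → ℝ≥0∞} (w : E → ℝ≥0∞) {t : ℝ≥0∞} {x : E} {r : ℝ}
    (hr : 0 < r) (h : t * μ (ball x r) ≤ ∫⁻ y in ball x r, u y ∂μ) :
    t * μ.withDensity w (closedBall x (5 * r)) ≤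
      6 ^ finrank ℝ E * ∫⁻ y in ball x r, u y * maximalFunction μ w y ∂μ := by
  set V := μ (ball x r)
  set ν := μ.withDensity w
  have hV : V ≠ ⊤ := measure_ball_lt_top.ne
  have hνle : ∀ y ∈ ball x r,
      ν (closedBall x (5 * r)) ≤ 6 ^ finrank ℝ E * V * maximalFunction μ w y := fun y hy => calc
    ν (closedBall x (5 * r)) ≤ ν (ball y (6 * r)) :=
        measure_mono (closedBall_subset_ball' (by linarith [mem_ball.1 hy, dist_comm x y]))
    _ = ∫⁻ z in ball y (6 * r), w z ∂μ := withDensity_apply w measurableSet_ball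
    _ ≤ μ (ball y (6 * r)) * maximalFunction μ w y :=
        setLIntegral_ball_le_measure_mul_maximalFunction μ w y (by positivity)
    _ = 6 ^ finrank ℝ E * V * maximalFunction μ w y := by rw [measure_ball_six_mul μ x y r]
  rw [← ENNReal.mul_le_mul_iff_left (measure_ball_pos μ x hr).ne' hV]
  calc t * ν (closedBall x (5 * r)) * V = ν (closedBall x (5 * r)) * (t * V) := by ring
    _ ≤ ν (closedBall x (5 * r)) * ∫⁻ y in ball x r, u y ∂μ := by gcongr
    _ ≤ ∫⁻ y in ball x r, ν (closedBall x (5 * r)) * u y ∂μ := lintegral_const_mul_le _ _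
    _ ≤ ∫⁻ y in ball x r, 6 ^ finrank ℝ E * V * (u y * maximalFunction μ w y) ∂μ :=
        setLIntegral_mono' measurableSet_ball fun y hy =>
          (mul_le_mul_left (hνle y hy) (u y)).trans_eq (by ring)
    _ = 6 ^ finrank ℝ E * (∫⁻ y in ball x r, u y * maximalFunction μ w y ∂μ) * V := by
        rw [lintegral_const_mul' _ _ (by finiteness)]
        ring

theorem mul_withDensity_le_of_forall_exists_ball {u : E → ℝ≥0∞} (w : E → ℝ≥0∞) {t : ℝ≥0∞}
    {S : Set E} {R : ℝ}
    (hS : ∀ x ∈ S, ∃ r, 0 < r ∧ r ≤ R ∧ t * μ (ball x r) ≤ ∫⁻ y in ball x r, u y ∂μ) :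
    t * μ.withDensity w S ≤ 6 ^ finrank ℝ E * ∫⁻ x, u x * maximalFunction μ w x ∂μ := by
  choose! r hr0 hrR hr using hS
  obtain ⟨v, hvS, hv_disj, hv_cover⟩ :=
    Vitali.exists_disjoint_subfamily_covering_enlargement_closedBall S id r R hrR 5 (by norm_num)
  have : Countable v := (hv_disj.countable_of_nonempty_interior fun x hx =>
    ⟨x, ball_subset_interior_closedBall (mem_ball_self (hr0 x (hvS hx)))⟩).to_subtype
  have hcover : S ⊆ ⋃ x : v, closedBall (x : E) (5 * r x) := fun x hx => by
    obtain ⟨y, hy, hxy⟩ := hv_cover x hx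
    exact mem_iUnion.2 ⟨⟨y, hy⟩, hxy (mem_closedBall_self (hr0 x hx).le)⟩
  have hdisj : Pairwise (Disjoint on fun x : v => ball (x : E) (r x)) := fun x y hxy =>
    (hv_disj x.2 y.2 (Subtype.coe_ne_coe.2 hxy)).mono ball_subset_closedBall ball_subset_closedBall
  calc t * μ.withDensity w S
      ≤ t * ∑' x : v, μ.withDensity w (closedBall (x : E) (5 * r x)) := by
        gcongr
        exact (measure_mono hcover).trans (measure_iUnion_le _)
    _ = ∑' x : v, t * μ.withDensity w (closedBall (x : E) (5 * r x)) := ENNReal.tsum_mul_left.symm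
    _ ≤ ∑' x : v, 6 ^ finrank ℝ E * ∫⁻ y in ball (x : E) (r x), u y * maximalFunction μ w y ∂μ :=
        ENNReal.tsum_le_tsum fun x =>
          mul_withDensity_closedBall_le μ w (hr0 x (hvS x.2)) (hr x (hvS x.2))
    _ = 6 ^ finrank ℝ E * ∫⁻ y in ⋃ x : v, ball (x : E) (r x), u y * maximalFunction μ w y ∂μ := by
        rw [ENNReal.tsum_mul_left, lintegral_iUnion (fun _ => measurableSet_ball) hdisj]
    _ ≤ 6 ^ finrank ℝ E * ∫⁻ x, u x * maximalFunction μ w x ∂μ := by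
        gcongr
        exact Measure.restrict_le_self

theorem mul_withDensity_lt_maximalFunction_le (u w : E → ℝ≥0∞) (t : ℝ≥0∞) :
    t * μ.withDensity w {x | t < maximalFunction μ u x} ≤
      6 ^ finrank ℝ E * ∫⁻ x, u x * maximalFunction μ w x ∂μ := by
  set S : ℝ → Set E :=
    fun R => {x | ∃ r, 0 < r ∧ r ≤ R ∧ t * μ (ball x r) ≤ ∫⁻ y in ball x r, u y ∂μ}
  have hS : Monotone S := fun R R' h x ⟨r, hr0, hrR, hr⟩ => ⟨r, hr0, hrR.trans h, hr⟩
  have hsub : {x | t < maximalFunction μ u x} ⊆ ⋃ R, S R := fun x hx => by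
    obtain ⟨r, hr, hlt⟩ : ∃ r, 0 < r ∧ t < (μ (ball x r))⁻¹ * ∫⁻ y in ball x r, u y ∂μ := by
      simpa [maximalFunction, lt_iSup_iff] using hx
    rw [← ENNReal.div_eq_inv_mul, ENNReal.lt_div_iff_mul_lt (.inl (measure_ball_pos μ x hr).ne')
      (.inl measure_ball_lt_top.ne)] at hlt
    exact mem_iUnion.2 ⟨r, r, hr, le_rfl, hlt.le⟩
  calc t * μ.withDensity w {x | t < maximalFunction μ u x} ≤ t * μ.withDensity w (⋃ R, S R) := by
        gcongr
    _ = ⨆ R, t * μ.withDensity w (S R) := by rw [hS.measure_iUnion, ENNReal.mul_iSup]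
    _ ≤ 6 ^ finrank ℝ E * ∫⁻ x, u x * maximalFunction μ w x ∂μ :=
        iSup_le fun R => mul_withDensity_le_of_forall_exists_ball μ w fun _ hx => hx

theorem rpow_mul_withDensity_two_mul_lt_maximalFunction_le {u : E → ℝ≥0∞} (hu : Measurable u)
    (w : E → ℝ≥0∞) {a : ℝ≥0∞} (ha0 : a ≠ 0) (ha : a ≠ ⊤) {q : ℝ} (hq : 1 ≤ q) :
    a ^ q * μ.withDensity w {x | 2 * a < maximalFunction μ u x} ≤
      6 ^ finrank ℝ E * ∫⁻ x, (if a < u x then a ^ (q - 1) else 0) *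
        (u x * maximalFunction μ w x) ∂μ := by
  set v := {y | a < u y}.indicator u
  have hsub : {x | 2 * a < maximalFunction μ u x} ⊆ {x | a < maximalFunction μ v x} :=
    fun x hx => by
      have := (mem_ofPred.1 hx).trans_le (maximalFunction_le_indicator_add μ hu a x)
      rw [two_mul] at this
      exact (ENNReal.add_lt_add_iff_right ha).1 this
  calc a ^ q * μ.withDensity w {x | 2 * a < maximalFunction μ u x}
      ≤ a ^ (q - 1) * (a * μ.withDensity w {x | a < maximalFunction μ v x}) := by
        rw [← mul_assoc, ENNReal.rpow_sub_one_mul_self a hq]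
        gcongr
    _ ≤ a ^ (q - 1) * (6 ^ finrank ℝ E * ∫⁻ x, v x * maximalFunction μ w x ∂μ) :=
        mul_le_mul_right (mul_withDensity_lt_maximalFunction_le μ v w a) _
    _ = 6 ^ finrank ℝ E * ∫⁻ x, a ^ (q - 1) * (v x * maximalFunction μ w x) ∂μ := by
        rw [lintegral_const_mul' _ _ (ENNReal.rpow_ne_top_of_ne_zero ha0 ha)]
        ring
    _ = _ := by
        congr 1
        refine lintegral_congr fun x => ?_
        by_cases h : a < u x <;> simp [v, h]

/-- `6 ^ d` comes from the Vitali covering, `4 ^ q` and the geometric factor from the dyadic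
decomposition. -/
def feffermanSteinConst (d : ℕ) (q : ℝ) : ℝ≥0∞ := 4 ^ q * 6 ^ d * (1 - 2 ^ (1 - q))⁻¹

theorem one_le_feffermanSteinConst (d : ℕ) {q : ℝ} (hq : 0 < q) : 1 ≤ feffermanSteinConst d q :=
  one_le_mul (one_le_mul (ENNReal.one_le_rpow (by norm_num) hq) (one_le_pow₀ (by norm_num)))
    (ENNReal.one_le_inv.2 tsub_le_self)

theorem feffermanSteinConst_ne_top (d : ℕ) {q : ℝ} (hq : 1 < q) : feffermanSteinConst d q ≠ ⊤ :=
  ENNReal.mul_ne_top (ENNReal.mul_ne_top (ENNReal.rpow_ne_top_of_nonneg (by linarith)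
    (by norm_num)) (by finiteness))
    (ENNReal.inv_ne_top.2 (ENNReal.one_sub_two_rpow_ne_zero (by linarith)))

theorem lintegral_maximalFunction_rpow_mul_le {u w : E → ℝ≥0∞} (hu : Measurable u)
    (hw : Measurable w) {q : ℝ} (hq : 1 < q) :
    ∫⁻ x, maximalFunction μ u x ^ q * w x ∂μ ≤
      feffermanSteinConst (finrank ℝ E) q * ∫⁻ x, u x ^ q * maximalFunction μ w x ∂μ := by
  set Mu := maximalFunction μ u
  set Mw := maximalFunction μ w
  have hMu : Measurable Mu := measurable_maximalFunction μ u
  have hlevel : ∀ k : ℤ, ((2 : ℝ≥0∞) ^ k) ^ q * μ.withDensity w {x | 2 * 2 ^ k < Mu x} ≤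
      6 ^ finrank ℝ E * ∫⁻ x, (if (2 : ℝ≥0∞) ^ k < u x then ((2 : ℝ≥0∞) ^ k) ^ (q - 1) else 0) *
        (u x * Mw x) ∂μ := fun k =>
    rpow_mul_withDensity_two_mul_lt_maximalFunction_le μ hu w
      (ENNReal.zpow_pos two_ne_zero ENNReal.ofNat_ne_top k).ne'
      (ENNReal.zpow_ne_top two_ne_zero ENNReal.ofNat_ne_top k) hq.le
  calc ∫⁻ x, Mu x ^ q * w x ∂μ = ∫⁻ x, Mu x ^ q ∂μ.withDensity w := by
        rw [lintegral_withDensity_eq_lintegral_mul _ hw (hMu.pow_const q)]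
        simp only [Pi.mul_apply, mul_comm]
    _ ≤ 4 ^ q * ∑' k : ℤ, ((2 : ℝ≥0∞) ^ k) ^ q * μ.withDensity w {x | 2 * 2 ^ k < Mu x} :=
        lintegral_rpow_le_tsum_measure_dyadic _ hMu (by linarith)
    _ ≤ 4 ^ q * ∑' k : ℤ, 6 ^ finrank ℝ E * ∫⁻ x, (if (2 : ℝ≥0∞) ^ k < u x
          then ((2 : ℝ≥0∞) ^ k) ^ (q - 1) else 0) * (u x * Mw x) ∂μ :=
        mul_le_mul_right (ENNReal.tsum_le_tsum hlevel) _
    _ ≤ 4 ^ q * 6 ^ finrank ℝ E *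
          ((1 - 2 ^ (1 - q))⁻¹ * ∫⁻ x, u x ^ (q - 1) * (u x * Mw x) ∂μ) := by
        rw [ENNReal.tsum_mul_left, mul_assoc]
        gcongr
        simpa only [neg_sub] using tsum_lintegral_dyadic_le μ (h := fun x => u x * Mw x) hu
          (hu.mul (measurable_maximalFunction μ w)) (sub_pos.2 hq)
    _ = feffermanSteinConst (finrank ℝ E) q * ∫⁻ x, u x ^ q * Mw x ∂μ := by
        simp_rw [← mul_assoc (u _ ^ (q - 1)), ENNReal.rpow_sub_one_mul_self _ hq.le,
          feffermanSteinConst]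
        ring

theorem lintegral_maximalFunction_rpow_le {u : E → ℝ≥0∞} (hu : Measurable u) {q : ℝ} (hq : 1 < q) :
    ∫⁻ x, maximalFunction μ u x ^ q ∂μ ≤
      feffermanSteinConst (finrank ℝ E) q * ∫⁻ x, u x ^ q ∂μ := by
  have h := lintegral_maximalFunction_rpow_mul_le μ hu (measurable_const (a := (1 : ℝ≥0∞))) hq
  simp only [mul_one] at h
  refine h.trans ?_
  gcongr with x
  exact mul_le_of_le_one_right' (maximalFunction_le_of_le_const μ (fun _ => le_rfl) x)

variable {ι : Type*} (s : Finset ι) {u : ι → E → ℝ≥0∞}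

theorem lintegral_sum_maximalFunction_rpow_le_card_mul (hu : ∀ i, Measurable (u i)) {p : ℝ}
    (hp : 1 < p) :
    ∫⁻ x, (∑ i ∈ s, maximalFunction μ (u i) x) ^ p ∂μ ≤
      (s.card : ℝ≥0∞) ^ p * feffermanSteinConst (finrank ℝ E) p *
        ∫⁻ x, (∑ i ∈ s, u i x) ^ p ∂μ := by
  set G := fun x => ∑ i ∈ s, u i x
  have hG : Measurable G := Finset.measurable_sum _ fun i _ => hu i
  have hpt : ∀ x, ∑ i ∈ s, maximalFunction μ (u i) x ≤ s.card * maximalFunction μ G x := fun x =>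
    calc ∑ i ∈ s, maximalFunction μ (u i) x ≤ ∑ i ∈ s, maximalFunction μ G x :=
          Finset.sum_le_sum fun i hi => maximalFunction_mono μ
            (fun y => Finset.single_le_sum (f := fun j => u j y) (fun j _ => zero_le) hi) x
      _ = s.card * maximalFunction μ G x := by rw [Finset.sum_const, nsmul_eq_mul]
  calc ∫⁻ x, (∑ i ∈ s, maximalFunction μ (u i) x) ^ p ∂μ
      ≤ ∫⁻ x, (s.card * maximalFunction μ G x) ^ p ∂μ :=
        lintegral_mono fun x => ENNReal.rpow_le_rpow (hpt x) (by linarith)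
    _ = (s.card : ℝ≥0∞) ^ p * ∫⁻ x, maximalFunction μ G x ^ p ∂μ := by
        simp_rw [ENNReal.mul_rpow_of_nonneg _ _ (by linarith : (0 : ℝ) ≤ p)]
        exact lintegral_const_mul' _ _
          (ENNReal.rpow_ne_top_of_nonneg (by linarith) (ENNReal.natCast_ne_top _))
    _ ≤ (s.card : ℝ≥0∞) ^ p * (feffermanSteinConst (finrank ℝ E) p * ∫⁻ x, G x ^ p ∂μ) := by
        gcongr
        exact lintegral_maximalFunction_rpow_le μ hG hp
    _ = _ := by ring

theorem lintegral_sum_maximalFunction_rpow_mul_le (hu : ∀ i, Measurable (u i)) {w : E → ℝ≥0∞}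
    (hw : Measurable w) {q : ℝ} (hq : 1 < q) :
    ∫⁻ x, (∑ i ∈ s, maximalFunction μ (u i) x) ^ q * w x ∂μ ≤
      (s.card : ℝ≥0∞) ^ (q - 1) * feffermanSteinConst (finrank ℝ E) q *
        ∫⁻ x, (∑ i ∈ s, u i x) ^ q * maximalFunction μ w x ∂μ := by
  set C := feffermanSteinConst (finrank ℝ E) q
  set Mw := maximalFunction μ w
  have hcard : (s.card : ℝ≥0∞) ^ (q - 1) ≠ ⊤ :=
    ENNReal.rpow_ne_top_of_nonneg (by linarith) (ENNReal.natCast_ne_top _)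
  calc ∫⁻ x, (∑ i ∈ s, maximalFunction μ (u i) x) ^ q * w x ∂μ
      ≤ ∫⁻ x, (s.card : ℝ≥0∞) ^ (q - 1) * ∑ i ∈ s, maximalFunction μ (u i) x ^ q * w x ∂μ :=
        lintegral_mono fun x => by
          rw [← Finset.sum_mul, ← mul_assoc]
          gcongr
          exact ENNReal.rpow_sum_le_const_mul_sum_rpow s _ hq.le
    _ = (s.card : ℝ≥0∞) ^ (q - 1) * ∑ i ∈ s, ∫⁻ x, maximalFunction μ (u i) x ^ q * w x ∂μ := by
        rw [lintegral_const_mul' _ _ hcard, lintegral_finsetSum (f := fun i x =>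
          maximalFunction μ (u i) x ^ q * w x) _ fun i _ =>
            ((measurable_maximalFunction μ _).pow_const q).mul hw]
    _ ≤ (s.card : ℝ≥0∞) ^ (q - 1) * ∑ i ∈ s, C * ∫⁻ x, u i x ^ q * Mw x ∂μ := by
        gcongr with i
        exact lintegral_maximalFunction_rpow_mul_le μ (hu i) hw hq
    _ = (s.card : ℝ≥0∞) ^ (q - 1) * C * ∫⁻ x, (∑ i ∈ s, u i x ^ q) * Mw x ∂μ := by
        simp_rw [Finset.sum_mul]
        rw [lintegral_finsetSum (f := fun i x => u i x ^ q * Mw x) _ fun i _ =>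
          ((hu i).pow_const q).mul (measurable_maximalFunction μ w), ← Finset.mul_sum, mul_assoc]
    _ ≤ _ := by
        gcongr with x
        exact ENNReal.sum_rpow_le_rpow_sum s _ hq.le

theorem lintegral_rpow_mul_maximalFunction_le {G W : E → ℝ≥0∞} (hG : Measurable G)
    (hW : Measurable W) {p q : ℝ} (hq : 0 < q) (hqp : q < p) :
    ∫⁻ x, G x ^ q * maximalFunction μ W x ∂μ ≤
      (∫⁻ x, G x ^ p ∂μ) ^ (q / p) * (feffermanSteinConst (finrank ℝ E) (p / (p - q)) *
        ∫⁻ x, W x ^ (p / (p - q)) ∂μ) ^ (1 - q / p) := by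
  have hpq : 0 < p - q := sub_pos.2 hqp
  have hp : p ≠ 0 := by linarith
  have hconj : (p / q).HolderConjugate (p / (p - q)) := by
    rw [Real.holderConjugate_iff]
    refine ⟨(one_lt_div hq).2 hqp, ?_⟩
    field_simp
    ring
  have hholder := ENNReal.lintegral_mul_le_Lp_mul_Lq μ hconj (f := fun x => G x ^ q)
    (hG.pow_const q).aemeasurable (measurable_maximalFunction μ W).aemeasurable
  have hGp : ∀ x, (G x ^ q) ^ (p / q) = G x ^ p := fun x => by
    rw [← ENNReal.rpow_mul, mul_div_cancel₀ _ hq.ne']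
  have hexp : 1 / (p / (p - q)) = 1 - q / p := by field_simp
  simp only [Pi.mul_apply, hGp, one_div_div, hexp] at hholder
  refine hholder.trans ?_
  gcongr
  · exact sub_nonneg.2 ((div_le_one (by linarith)).2 hqp.le)
  · exact lintegral_maximalFunction_rpow_le μ hW ((one_lt_div hpq).2 (by linarith))

def sumMaximalConst (d : ℕ) (p q : ℝ) : ℝ≥0∞ :=
  feffermanSteinConst d q * feffermanSteinConst d (p / (p - q)) ^ (1 - q / p)

theorem one_le_sumMaximalConst (d : ℕ) {p q : ℝ} (hq : 1 < q) (hqp : q < p) :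
    1 ≤ sumMaximalConst d p q :=
  one_le_mul (one_le_feffermanSteinConst _ (by linarith)) (ENNReal.one_le_rpow
    (one_le_feffermanSteinConst _ (div_pos (by linarith) (by linarith)))
    (sub_pos.2 ((div_lt_one (by linarith)).2 hqp)))

theorem sumMaximalConst_ne_top (d : ℕ) {p q : ℝ} (hq : 1 < q) (hqp : q < p) :
    sumMaximalConst d p q ≠ ⊤ :=
  ENNReal.mul_ne_top (feffermanSteinConst_ne_top d hq) (ENNReal.rpow_ne_top_of_nonneg
    (sub_nonneg.2 ((div_le_one (by linarith)).2 hqp.le))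
    (feffermanSteinConst_ne_top d ((one_lt_div (by linarith)).2 (by linarith))))

theorem lintegral_sum_maximalFunction_rpow_le_mul_self_rpow (hu : ∀ i, Measurable (u i))
    {p q : ℝ} (hq : 1 < q) (hqp : q < p) :
    ∫⁻ x, (∑ i ∈ s, maximalFunction μ (u i) x) ^ p ∂μ ≤
      (s.card : ℝ≥0∞) ^ (q - 1) * sumMaximalConst (finrank ℝ E) p q *
        (∫⁻ x, (∑ i ∈ s, u i x) ^ p ∂μ) ^ (q / p) *
        (∫⁻ x, (∑ i ∈ s, maximalFunction μ (u i) x) ^ p ∂μ) ^ (1 - q / p) := by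
  set F := fun x => ∑ i ∈ s, maximalFunction μ (u i) x
  set W := fun x => F x ^ (p - q)
  have hpq : 0 < p - q := sub_pos.2 hqp
  have hW : Measurable W :=
    (Finset.measurable_sum _ fun i _ => measurable_maximalFunction μ (u i)).pow_const _
  have hWr : ∀ x, W x ^ (p / (p - q)) = F x ^ p := fun x => by
    rw [← ENNReal.rpow_mul, mul_div_cancel₀ _ hpq.ne']
  calc ∫⁻ x, F x ^ p ∂μ = ∫⁻ x, F x ^ q * W x ∂μ := lintegral_congr fun x => by
        rw [← ENNReal.rpow_add_of_nonneg _ _ (by linarith) hpq.le, add_sub_cancel]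
    _ ≤ (s.card : ℝ≥0∞) ^ (q - 1) * feffermanSteinConst (finrank ℝ E) q *
          ∫⁻ x, (∑ i ∈ s, u i x) ^ q * maximalFunction μ W x ∂μ :=
        lintegral_sum_maximalFunction_rpow_mul_le μ s hu hW hq
    _ ≤ (s.card : ℝ≥0∞) ^ (q - 1) * feffermanSteinConst (finrank ℝ E) q *
          ((∫⁻ x, (∑ i ∈ s, u i x) ^ p ∂μ) ^ (q / p) *
            (feffermanSteinConst (finrank ℝ E) (p / (p - q)) * ∫⁻ x, F x ^ p ∂μ) ^
              (1 - q / p)) := by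
        gcongr
        simpa only [hWr] using lintegral_rpow_mul_maximalFunction_le μ
          (Finset.measurable_sum _ fun i _ => hu i) hW (by linarith) hqp
    _ = _ := by
        rw [ENNReal.mul_rpow_of_nonneg _ _ (sub_nonneg.2 ((div_le_one (by linarith)).2 hqp.le)),
          sumMaximalConst]
        ring

theorem lintegral_sum_maximalFunction_rpow_inv_le (hu : ∀ i, Measurable (u i)) {p q : ℝ}
    (hq : 1 < q) (hqp : q < p) :
    (∫⁻ x, (∑ i ∈ s, maximalFunction μ (u i) x) ^ p ∂μ) ^ p⁻¹ ≤
      (s.card : ℝ≥0∞) ^ (1 - q⁻¹) * sumMaximalConst (finrank ℝ E) p q ^ q⁻¹ *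
        (∫⁻ x, (∑ i ∈ s, u i x) ^ p ∂μ) ^ p⁻¹ := by
  set A := ∫⁻ x, (∑ i ∈ s, maximalFunction μ (u i) x) ^ p ∂μ
  set B := ∫⁻ x, (∑ i ∈ s, u i x) ^ p ∂μ
  set K := sumMaximalConst (finrank ℝ E) p q
  have hp : 1 < p := hq.trans hqp
  rcases eq_or_ne B ⊤ with hB | hB
  · have hs : s.Nonempty := Finset.nonempty_iff_ne_empty.2 fun hs => by
      simp [B, hs, ENNReal.zero_rpow_of_pos (zero_lt_one.trans hp)] at hB
    have hcoef : 1 ≤ (s.card : ℝ≥0∞) ^ (1 - q⁻¹) * K ^ q⁻¹ := one_le_mul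
      (ENNReal.one_le_rpow (by exact_mod_cast hs.card_pos) (sub_pos.2 (inv_lt_one_of_one_lt₀ hq)))
      (ENNReal.one_le_rpow (one_le_sumMaximalConst _ hq hqp) (by positivity))
    rw [hB, ENNReal.top_rpow_of_pos (by positivity),
      ENNReal.mul_top (zero_lt_one.trans_le hcoef).ne']
    exact le_top
  have hA : A ≠ ⊤ := ne_top_of_le_ne_top (ENNReal.mul_ne_top (ENNReal.mul_ne_top
    (ENNReal.rpow_ne_top_of_nonneg (by positivity) (ENNReal.natCast_ne_top _))
    (feffermanSteinConst_ne_top _ hp)) hB)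
    (lintegral_sum_maximalFunction_rpow_le_card_mul μ s hu hp)
  have habsorb : A ^ (q / p) ≤ (s.card : ℝ≥0∞) ^ (q - 1) * K * B ^ (q / p) := by
    simpa only [sub_sub_cancel] using ENNReal.rpow_one_sub_le_of_le_mul_rpow
      (sub_lt_self 1 (div_pos (by linarith) (by linarith))) hA
      (lintegral_sum_maximalFunction_rpow_le_mul_self_rpow μ s hu hq hqp)
  calc A ^ p⁻¹ = (A ^ (q / p)) ^ q⁻¹ := by
        rw [← ENNReal.rpow_mul]
        congr 1
        field_simp
    _ ≤ ((s.card : ℝ≥0∞) ^ (q - 1) * K * B ^ (q / p)) ^ q⁻¹ := by gcongr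
    _ = (s.card : ℝ≥0∞) ^ (1 - q⁻¹) * K ^ q⁻¹ * B ^ p⁻¹ := by
        rw [ENNReal.mul_rpow_of_nonneg _ _ (by positivity),
          ENNReal.mul_rpow_of_nonneg _ _ (by positivity), ← ENNReal.rpow_mul, ← ENNReal.rpow_mul]
        congr 3 <;> field_simp

end AddHaar

theorem HLmax_eq_maximalFunction {n : ℕ} (g : EuclideanSpace ℝ (Fin n) → ℝ) :
    HLmax g = maximalFunction volume fun y => ENNReal.ofReal |g y| := rfl

/-- For any `N` functions `g_1, …, g_N` on `ℝ³` and every `ε > 0`,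
`‖Σ_m M g_m‖_{L^{10/3}} ≤ C_ε N^ε ‖Σ_m |g_m|‖_{L^{10/3}}`, with `C_ε` independent of `N`
and of the `g_m`. -/
theorem sum_of_maximal_functions (ε : ℝ) (hε : 0 < ε) :
    ∃ C > (0:ℝ), ∀ (N : ℕ) (g : Fin N → (EuclideanSpace ℝ (Fin 3) → ℝ)),
      (∀ m, Measurable (g m)) →
      (∫⁻ x : EuclideanSpace ℝ (Fin 3),
          (∑ m, HLmax (g m) x) ^ ((10:ℝ)/3) ∂volume) ^ ((3:ℝ)/10) ≤
        ENNReal.ofReal (C * (N : ℝ) ^ ε) *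
          (∫⁻ x : EuclideanSpace ℝ (Fin 3),
            (ENNReal.ofReal (∑ m, |g m x|)) ^ ((10:ℝ)/3) ∂volume) ^ ((3:ℝ)/10) := by
  set q := 1 + min ε 1
  have hq : 1 < q := lt_add_of_pos_right 1 (lt_min hε one_pos)
  have hqp : q < 10 / 3 := by linarith [min_le_right ε 1]
  have hexp0 : 0 < 1 - q⁻¹ := sub_pos.2 (inv_lt_one_of_one_lt₀ hq)
  have hexp : 1 - q⁻¹ ≤ ε := calc
    1 - q⁻¹ = (q - 1) / q := by field_simp
    _ ≤ q - 1 := div_le_self (by linarith) hq.le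
    _ ≤ ε := by linarith [min_le_left ε 1]
  set K := sumMaximalConst 3 (10 / 3) q ^ q⁻¹
  have hK : K ≠ ⊤ :=
    ENNReal.rpow_ne_top_of_nonneg (by positivity) (sumMaximalConst_ne_top 3 hq hqp)
  refine ⟨K.toReal + 1, by positivity, fun N g hg => ?_⟩
  have key := lintegral_sum_maximalFunction_rpow_inv_le volume Finset.univ
    (fun m => (hg m).abs.ennreal_ofReal) hq hqp
  rw [finrank_euclideanSpace_fin, Finset.card_univ, Fintype.card_fin] at key
  simp_rw [HLmax_eq_maximalFunction, ENNReal.ofReal_sum_of_nonneg fun m _ => abs_nonneg (g m _)]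
  rw [show (3 : ℝ) / 10 = (10 / 3)⁻¹ by norm_num, ENNReal.ofReal_mul (by positivity),
    mul_comm (ENNReal.ofReal _)]
  refine key.trans (mul_le_mul_left (mul_le_mul' (ENNReal.natCast_rpow_le_ofReal_rpow N hexp0 hexp)
    ((ENNReal.ofReal_toReal hK).symm.le.trans (ENNReal.ofReal_le_ofReal (by linarith)))) _)

end
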